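/- Streaming synopsis partial-sum error bound: if the pruned synopsis indices i_l, i_u are chosen so that each merged block of relevance scores has total mass at most ε Z (where Z = ∑_{l=1}^n φ_l), then the partial sums of the synopsis relevance scores up to i_l and i_u approximate the true partial sums up to k_{j−1} and k_j within ε Z: |∑_{l=1}^{i_l} φ^S_l − ∑_{l=1}^{k_{j−1}} φ_l| ≤ ε Z and |∑_{l=1}^{i_u} φ^S_l − ∑_{l=1}^{k_j} φ_l| ≤ ε Z. -/

import Mathlib

/-!
The synopsis partial sums telescope: summing the scores of the first `p` blocks gives the true
prefix sum up to the right endpoint `r p`. Hence if block `m` is the first to reach a threshold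
`τ ≤ Z`, the true first index `k` reaching `τ` lies in that block, `r (m - 1) < k ≤ r m`, and the
error is the mass of the block to the right of `k`. It vanishes for a singleton block and is at
most `φS m ≤ ε Z` otherwise.
-/

open Finset

def IsFirstHit (f : ℕ → ℝ) (τ : ℝ) (k : ℕ) : Prop :=
  τ ≤ f k ∧ ∀ k' < k, f k' < τ

namespace IsFirstHit

variable {f : ℕ → ℝ} {τ : ℝ} {k : ℕ}

theorem le_of_le (h : IsFirstHit f τ k) {a : ℕ} (ha : τ ≤ f a) : k ≤ a :=
  not_lt.1 fun hak => (h.2 a hak).not_ge ha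

theorem lt_of_lt (h : IsFirstHit f τ k) {s : Set ℕ} (hf : MonotoneOn f s) (hk : k ∈ s)
    {b : ℕ} (hb : b ∈ s) (hbτ : f b < τ) : b < k :=
  not_le.1 fun hkb => ((hf hk hb hkb).trans_lt hbτ).not_ge h.1

end IsFirstHit

theorem mul_div_le_self_of_le {c d Z : ℝ} (hd : 0 ≤ d) (hZ : 0 ≤ Z) (hc : c ≤ d) :
    c * Z / d ≤ Z :=
  div_le_of_le_mul₀ hd hZ (by nlinarith)

theorem sum_Icc_one_add_sum_Icc (φ : ℕ → ℝ) {a b : ℕ} (h : a ≤ b) :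
    ∑ l ∈ Icc 1 a, φ l + ∑ l ∈ Icc (a + 1) b, φ l = ∑ l ∈ Icc 1 b, φ l := by
  simpa only [← Icc_add_one_left_eq_Ioc, zero_add] using sum_Ioc_consecutive φ (Nat.zero_le a) h

section PrefixSum

variable {φ : ℕ → ℝ} {n : ℕ}

theorem monotoneOn_sum_Icc_one (hφ : ∀ l ∈ Icc 1 n, 0 ≤ φ l) :
    MonotoneOn (fun k => ∑ l ∈ Icc 1 k, φ l) (Set.Iic n) := fun _ _ _ hb hab =>
  sum_le_sum_of_subset_of_nonneg (Icc_subset_Icc_right hab) fun i hi _ =>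
    hφ i (Icc_subset_Icc_right hb hi)

theorem abs_sum_Icc_one_sub_le_of_mem_block (hφ : ∀ l ∈ Icc 1 n, 0 ≤ φ l) {a b k : ℕ}
    {δ : ℝ} (hbk : b < k) (hka : k ≤ a) (han : a ≤ n) (hδ : 0 ≤ δ)
    (hblock : 1 < a - b → ∑ l ∈ Icc (b + 1) a, φ l ≤ δ) :
    |∑ l ∈ Icc 1 a, φ l - ∑ l ∈ Icc 1 k, φ l| ≤ δ := by
  have hφ' : ∀ c, ∀ l ∈ Icc (c + 1) a, 0 ≤ φ l := fun c l hl =>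
    hφ l (Icc_subset_Icc (by omega) han hl)
  rw [← sum_Icc_one_add_sum_Icc φ hka, add_sub_cancel_left,
    abs_of_nonneg (sum_nonneg (hφ' k))]
  obtain rfl | hka := hka.eq_or_lt
  · simpa using hδ
  · calc ∑ l ∈ Icc (k + 1) a, φ l ≤ ∑ l ∈ Icc (b + 1) a, φ l :=
          sum_le_sum_of_subset_of_nonneg (Icc_subset_Icc_left (by omega))
            fun l hl _ => hφ' b l hl
      _ ≤ δ := hblock (by omega)

theorem sum_Icc_one_blocks {φS : ℕ → ℝ} {r : ℕ → ℕ} (hr0 : r 0 = 0)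
    (hφS : ∀ m, φS m = ∑ l ∈ Icc (r (m - 1) + 1) (r m), φ l) {p : ℕ}
    (hr : ∀ m < p, r m ≤ r (m + 1)) :
    ∑ m ∈ Icc 1 p, φS m = ∑ l ∈ Icc 1 (r p), φ l := by
  induction p with
  | zero => simp [hr0]
  | succ q ih =>
    rw [sum_Icc_succ_top (by omega), ih fun m hm => hr m (by omega), hφS, Nat.add_sub_cancel,
      sum_Icc_one_add_sum_Icc φ (hr q q.lt_succ_self)]

theorem abs_sum_Icc_one_synopsis_sub_le (hφ : ∀ l ∈ Icc 1 n, 0 ≤ φ l)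
    {L : ℕ} {φS : ℕ → ℝ} {r : ℕ → ℕ} (hr0 : r 0 = 0) (hrL : r L = n)
    (hrmono : StrictMonoOn r (Set.Icc 0 L))
    (hφS : ∀ m, φS m = ∑ l ∈ Icc (r (m - 1) + 1) (r m), φ l) {δ : ℝ} (hδ : 0 ≤ δ)
    (hblock : ∀ m ∈ Icc 1 L, 1 < r m - r (m - 1) → φS m ≤ δ)
    {τ : ℝ} {k m : ℕ} (hτ : τ ≤ ∑ l ∈ Icc 1 n, φ l)
    (hk : IsFirstHit (fun k => ∑ l ∈ Icc 1 k, φ l) τ k)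
    (hm : IsFirstHit (fun m => ∑ m' ∈ Icc 1 m, φS m') τ m) :
    |∑ m' ∈ Icc 1 m, φS m' - ∑ l ∈ Icc 1 k, φ l| ≤ δ := by
  have hmono : MonotoneOn r (Set.Icc 0 L) := hrmono.monotoneOn
  have htele : ∀ p ≤ L, ∑ m' ∈ Icc 1 p, φS m' = ∑ l ∈ Icc 1 (r p), φ l := fun p hp =>
    sum_Icc_one_blocks hr0 hφS fun i hi =>
      hmono ⟨i.zero_le, by omega⟩ ⟨(i + 1).zero_le, by omega⟩ i.le_succ
  have hmL : m ≤ L := hm.le_of_le (by simpa only [htele L le_rfl, hrL] using hτ)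
  have hrn : r m ≤ n := hrL ▸ hmono ⟨m.zero_le, hmL⟩ ⟨L.zero_le, le_rfl⟩ hmL
  have hka : k ≤ r m := hk.le_of_le (htele m hmL ▸ hm.1)
  rw [htele m hmL]
  obtain rfl | hm0 := Nat.eq_zero_or_pos m
  · obtain rfl : k = 0 := Nat.le_zero.1 (hr0 ▸ hka)
    simpa [hr0] using hδ
  · have hr_lt : r (m - 1) < r m := hrmono ⟨(m - 1).zero_le, by omega⟩ ⟨m.zero_le, hmL⟩ (by omega)
    have hbk : r (m - 1) < k :=
      hk.lt_of_lt (monotoneOn_sum_Icc_one hφ) (hka.trans hrn) (hr_lt.le.trans hrn)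
        (htele (m - 1) (by omega) ▸ hm.2 _ (by omega))
    exact abs_sum_Icc_one_sub_le_of_mem_block hφ hbk hka hrn hδ fun h =>
      hφS m ▸ hblock m (mem_Icc.2 ⟨hm0, hmL⟩) h

end PrefixSum

theorem synopsis_partial_sum_error_general
    (n L n' j : ℕ) (hjn' : j ≤ n')
    (ε Z : ℝ) (hε : 0 ≤ ε)
    (φ φS : ℕ → ℝ) (r : ℕ → ℕ)
    (hφ : ∀ l ∈ Finset.Icc 1 n, 0 ≤ φ l)
    (hZ : Z = ∑ l ∈ Finset.Icc 1 n, φ l)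
    (hr0 : r 0 = 0) (hrL : r L = n)
    (hrmono : StrictMonoOn r (Set.Icc 0 L))
    (hφS : ∀ m, φS m = ∑ l ∈ Finset.Icc (r (m - 1) + 1) (r m), φ l)
    (hinv : ∀ m ∈ Finset.Icc 1 L, 1 < r m - r (m - 1) → φS m ≤ ε * Z)
    (k₁ k₂ m₁ m₂ : ℕ)
    (hk₁ : ((j : ℝ) - 1) * Z / n' ≤ ∑ l ∈ Finset.Icc 1 k₁, φ l ∧
      ∀ k' < k₁, ∑ l ∈ Finset.Icc 1 k', φ l < ((j : ℝ) - 1) * Z / n')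
    (hk₂ : (j : ℝ) * Z / n' ≤ ∑ l ∈ Finset.Icc 1 k₂, φ l ∧
      ∀ k' < k₂, ∑ l ∈ Finset.Icc 1 k', φ l < (j : ℝ) * Z / n')
    (hm₁ : ((j : ℝ) - 1) * Z / n' ≤ ∑ m' ∈ Finset.Icc 1 m₁, φS m' ∧
      ∀ m'' < m₁, ∑ m' ∈ Finset.Icc 1 m'', φS m' < ((j : ℝ) - 1) * Z / n')
    (hm₂ : (j : ℝ) * Z / n' ≤ ∑ m' ∈ Finset.Icc 1 m₂, φS m' ∧
      ∀ m'' < m₂, ∑ m' ∈ Finset.Icc 1 m'', φS m' < (j : ℝ) * Z / n') :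
    |(∑ m' ∈ Finset.Icc 1 m₁, φS m') - ∑ l ∈ Finset.Icc 1 k₁, φ l| ≤ ε * Z ∧
    |(∑ m' ∈ Finset.Icc 1 m₂, φS m') - ∑ l ∈ Finset.Icc 1 k₂, φ l| ≤ ε * Z := by
  have hZ0 : 0 ≤ Z := hZ ▸ sum_nonneg hφ
  have hj : (j : ℝ) ≤ n' := by exact_mod_cast hjn'
  have hτ : ∀ c : ℝ, c ≤ n' → c * Z / n' ≤ ∑ l ∈ Icc 1 n, φ l := fun c hc =>
    hZ ▸ mul_div_le_self_of_le n'.cast_nonneg hZ0 hc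
  have hεZ : 0 ≤ ε * Z := mul_nonneg hε hZ0
  exact ⟨abs_sum_Icc_one_synopsis_sub_le hφ hr0 hrL hrmono hφS hεZ hinv
      (hτ _ (by linarith)) hk₁ hm₁,
    abs_sum_Icc_one_synopsis_sub_le hφ hr0 hrL hrmono hφS hεZ hinv (hτ _ hj) hk₂ hm₂⟩

/-- Streaming synopsis partial-sum error bound: if every merged block (of size `> 1`) of the
synopsis has total relevance mass at most `ε * Z`, then the synopsis partial sums up to the
block indices `m₁`, `m₂` chosen for the thresholds `(j-1) * Z / n'` and `j * Z / n'`
approximate the true partial sums up to `k₁ = k_{j-1}` and `k₂ = k_j` within `ε * Z`. -/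
theorem synopsis_partial_sum_error
    (n L n' j : ℕ) (hn' : 1 ≤ n') (hj : 1 ≤ j) (hjn' : j ≤ n')
    (ε Z : ℝ) (hε : 0 ≤ ε)
    (φ φS : ℕ → ℝ) (r : ℕ → ℕ)
    (hφ : ∀ l ∈ Finset.Icc 1 n, 0 ≤ φ l)
    (hZ : Z = ∑ l ∈ Finset.Icc 1 n, φ l)
    (hr0 : r 0 = 0) (hrL : r L = n)
    (hrmono : StrictMonoOn r (Set.Icc 0 L))
    (hφS : ∀ m, φS m = ∑ l ∈ Finset.Icc (r (m - 1) + 1) (r m), φ l)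
    (hinv : ∀ m ∈ Finset.Icc 1 L, 1 < r m - r (m - 1) → φS m ≤ ε * Z)
    (k₁ k₂ m₁ m₂ : ℕ)
    (hk₁ : ((j : ℝ) - 1) * Z / n' ≤ ∑ l ∈ Finset.Icc 1 k₁, φ l ∧
      ∀ k' < k₁, ∑ l ∈ Finset.Icc 1 k', φ l < ((j : ℝ) - 1) * Z / n')
    (hk₂ : (j : ℝ) * Z / n' ≤ ∑ l ∈ Finset.Icc 1 k₂, φ l ∧
      ∀ k' < k₂, ∑ l ∈ Finset.Icc 1 k', φ l < (j : ℝ) * Z / n')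
    (hm₁ : ((j : ℝ) - 1) * Z / n' ≤ ∑ m' ∈ Finset.Icc 1 m₁, φS m' ∧
      ∀ m'' < m₁, ∑ m' ∈ Finset.Icc 1 m'', φS m' < ((j : ℝ) - 1) * Z / n')
    (hm₂ : (j : ℝ) * Z / n' ≤ ∑ m' ∈ Finset.Icc 1 m₂, φS m' ∧
      ∀ m'' < m₂, ∑ m' ∈ Finset.Icc 1 m'', φS m' < (j : ℝ) * Z / n') :
    |(∑ m' ∈ Finset.Icc 1 m₁, φS m') - ∑ l ∈ Finset.Icc 1 k₁, φ l| ≤ ε * Z ∧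
    |(∑ m' ∈ Finset.Icc 1 m₂, φS m') - ∑ l ∈ Finset.Icc 1 k₂, φ l| ≤ ε * Z :=
  synopsis_partial_sum_error_general n L n' j hjn' ε Z hε φ φS r hφ hZ hr0 hrL hrmono hφS hinv k₁ k₂
    m₁ m₂ hk₁ hk₂ hm₁ hm₂
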